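/- A tree T is graceful if and only if its spike tree spik(T) is strongly graceful with respect to the perfect matching consisting of the added end edges; that is, T admits a graceful labelling if and only if spik(T) admits a strong graceful labelling with respect to the matching {vv' : v a vertex of T}. -/

import Mathlib

/-!
A graceful labelling `g` of a tree on `n` vertices doubles to `2g` on the tree part of the spike
and extends to the pendant vertices by `v' ↦ 2n - 1 - 2 g v`: the tree edges then carry the even
labels `2 |g u - g w|` and the pendant edges the pairwise distinct odd labels `|2n - 1 - 4 g v|`.

Conversely, in a strong graceful labelling `f` of the spike the two ends of each pendant edge have
labels summing to `2n - 1`, so the `n` pendant edges carry `n` distinct odd labels in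
`[1, 2n - 1]`, i.e. all of them. Every tree edge therefore has an even label, so by connectedness
all `f v` with `v` in the tree have the same parity, and `f v / 2` is graceful.
-/

open SimpleGraph

/-- A graceful labelling of a graph `G` with `m` edges: an injective function
`f` from the vertices into `{0, 1, …, m}` such that the induced edge labels
`|f u − f v|` are pairwise distinct over the edges. -/
def IsGracefulLabeling {V : Type} (G : SimpleGraph V) (f : V → ℕ) : Prop :=
  Function.Injective f ∧ (∀ v, f v ≤ G.edgeSet.ncard) ∧
  ∀ u v x y : V, G.Adj u v → G.Adj x y →
    Nat.dist (f u) (f v) = Nat.dist (f x) (f y) → s(u, v) = s(x, y)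

/-- A strong graceful labelling of `G` on `n` vertices with respect to a matching `M`:
a graceful labelling such that `f x + f y = n - 1` for every edge `xy ∈ M`. -/
def IsStrongGracefulLabeling {V : Type} [Fintype V] (G : SimpleGraph V)
    (M : G.Subgraph) (f : V → ℕ) : Prop :=
  IsGracefulLabeling G f ∧ ∀ x y : V, M.Adj x y → f x + f y = Fintype.card V - 1


/-- The spike tree of `G`: add a new pendant vertex `Sum.inr v` adjacent to each
original vertex `Sum.inl v` of `G`. -/
def spike {V : Type} (G : SimpleGraph V) : SimpleGraph (V ⊕ V) where
  Adj a b :=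
    match a, b with
    | Sum.inl u, Sum.inl w => G.Adj u w
    | Sum.inl u, Sum.inr w => u = w
    | Sum.inr u, Sum.inl w => w = u
    | Sum.inr _, Sum.inr _ => False
  symm := by
    constructor
    rintro (u | u) (w | w) h
    · exact G.adj_symm h
    · exact h
    · exact h
    · exact h
  loopless := by
    constructor
    rintro (u | u) h
    · exact G.irrefl h
    · exact h

/-- The set of added end edges `(inl v)(inr v)` of `spike G`, as a subgraph. -/
def spikeMatching {V : Type} (G : SimpleGraph V) : (spike G).Subgraph where
  verts := Set.univ
  Adj a b := (∃ x, a = Sum.inl x ∧ b = Sum.inr x) ∨ (∃ x, a = Sum.inr x ∧ b = Sum.inl x)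
  adj_sub := by
    rintro a b (⟨x, rfl, rfl⟩ | ⟨x, rfl, rfl⟩) <;> exact rfl
  edge_vert := by
    intro a b _
    trivial
  symm := by
    constructor
    rintro a b (⟨x, rfl, rfl⟩ | ⟨x, rfl, rfl⟩)
    · exact Or.inr ⟨x, rfl, rfl⟩
    · exact Or.inl ⟨x, rfl, rfl⟩

open Function Set

lemma Nat.dist_eq_two_mul_dist_div_two {a b : ℕ} (h : a % 2 = b % 2) :
    Nat.dist a b = 2 * Nat.dist (a / 2) (b / 2) := by
  unfold Nat.dist
  omega

lemma odd_mem_range_of_injective {ι : Type} [Fintype ι] {p : ι → ℕ} (hp : Injective p)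
    (hodd : ∀ i, Odd (p i)) (hlt : ∀ i, p i < 2 * Fintype.card ι) {k : ℕ} (hk : Odd k)
    (hklt : k < 2 * Fintype.card ι) : k ∈ range p := by
  let half : ι → Fin (Fintype.card ι) := fun i => ⟨p i / 2, by have := hlt i; omega⟩
  have hhalf : Bijective half := by
    refine (Fintype.bijective_iff_injective_and_card half).2 ⟨fun i j hij => hp ?_, by simp⟩
    have hi := Nat.odd_iff.1 (hodd i)
    have hj := Nat.odd_iff.1 (hodd j)
    have : p i / 2 = p j / 2 := congrArg Fin.val hij
    omega
  obtain ⟨i, hi⟩ := hhalf.2 ⟨k / 2, by omega⟩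
  refine ⟨i, ?_⟩
  have : p i / 2 = k / 2 := congrArg Fin.val hi
  have := Nat.odd_iff.1 (hodd i)
  have := Nat.odd_iff.1 hk
  omega

lemma SimpleGraph.Preconnected.eq_of_forall_adj {V α : Type} {G : SimpleGraph V}
    (hG : G.Preconnected) {φ : V → α} (h : ∀ u w, G.Adj u w → φ u = φ w) (u w : V) :
    φ u = φ w := by
  obtain ⟨p⟩ := hG u w
  induction p with
  | nil => rfl
  | cons hadj _ ih => exact (h _ _ hadj).trans ih

lemma SimpleGraph.IsTree.ncard_edgeSet_add_one {V : Type} [Fintype V] {G : SimpleGraph V}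
    (hG : G.IsTree) : G.edgeSet.ncard + 1 = Fintype.card V := by
  classical
  rw [← hG.card_edgeFinset, ← Set.ncard_coe_finset, coe_edgeFinset]

section EdgeLabel

variable {V : Type}

def edgeLabel (f : V → ℕ) : Sym2 V → ℕ :=
  Sym2.lift ⟨fun u v => Nat.dist (f u) (f v), fun u v => Nat.dist_comm (f u) (f v)⟩

@[simp]
lemma edgeLabel_map {W : Type} (f : W → ℕ) (φ : V → W) (e : Sym2 V) :
    edgeLabel f (e.map φ) = edgeLabel (f ∘ φ) e := by
  induction e using Sym2.ind with
  | _ u v => rfl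

lemma edgeLabel_comp_map {W : Type} (f : W → ℕ) (φ : V → W) :
    edgeLabel f ∘ Sym2.map φ = edgeLabel (f ∘ φ) :=
  funext (edgeLabel_map f φ)

lemma isGracefulLabeling_iff_injOn_edgeLabel (G : SimpleGraph V) (f : V → ℕ) :
    IsGracefulLabeling G f ↔
      Injective f ∧ (∀ v, f v ≤ G.edgeSet.ncard) ∧ InjOn (edgeLabel f) G.edgeSet := by
  refine and_congr_right' (and_congr_right' ⟨fun h => ?_, fun h u v x y huv hxy heq => ?_⟩)
  · rintro ⟨u, v⟩ huv ⟨x, y⟩ hxy heq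
    exact h u v x y huv hxy heq
  · exact h (G.mem_edgeSet.2 huv) (G.mem_edgeSet.2 hxy) heq

lemma edgeLabel_eq_two_mul_edgeLabel_div_two {f : V → ℕ} (hf : ∀ u v, f u % 2 = f v % 2)
    (e : Sym2 V) : edgeLabel f e = 2 * edgeLabel (fun v => f v / 2) e := by
  induction e using Sym2.ind with
  | _ u v => exact Nat.dist_eq_two_mul_dist_div_two (hf u v)

lemma injOn_edgeLabel_div_two_iff {f : V → ℕ} (hf : ∀ u v, f u % 2 = f v % 2) {s : Set (Sym2 V)} :
    InjOn (edgeLabel (fun v => f v / 2)) s ↔ InjOn (edgeLabel f) s := by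
  have : edgeLabel f = (2 * ·) ∘ edgeLabel (fun v => f v / 2) :=
    funext (edgeLabel_eq_two_mul_edgeLabel_div_two hf)
  rw [this]
  exact ⟨fun h => (mul_right_injective₀ two_ne_zero).comp_injOn h, InjOn.of_comp⟩

end EdgeLabel

section Spike

variable {V : Type} {G : SimpleGraph V}

def pendantEdge (v : V) : Sym2 (V ⊕ V) := s(.inl v, .inr v)

lemma injective_pendantEdge : Injective (pendantEdge (V := V)) := fun v w h => by
  simpa [pendantEdge] using h

lemma edgeSet_spike :
    (spike G).edgeSet =
      Sym2.map Sum.inl '' G.edgeSet ∪ range pendantEdge := by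
  ext e
  induction e using Sym2.ind with
  | _ a b =>
    refine ⟨fun h => ?_, ?_⟩
    · rcases a with u | u <;> rcases b with w | w
      · exact .inl ⟨s(u, w), h, rfl⟩
      · exact .inr ⟨u, by rw [show u = w from h, pendantEdge]⟩
      · exact .inr ⟨w, by rw [show w = u from h, pendantEdge, Sym2.eq_swap]⟩
      · exact h.elim
    · rintro (⟨e, he, heq⟩ | ⟨v, heq⟩) <;> rw [← heq]
      · induction e using Sym2.ind with
        | _ u w => exact he
      · exact (rfl : v = v)

lemma disjoint_image_inl_range_pendantEdge (s : Set (Sym2 V)) :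
    Disjoint (Sym2.map Sum.inl '' s) (range pendantEdge) := by
  rw [Set.disjoint_left]
  rintro _ ⟨e, -, rfl⟩ ⟨v, hv⟩
  induction e using Sym2.ind with
  | _ a b => simp [pendantEdge, Sym2.map_mk] at hv

lemma ncard_edgeSet_spike [Finite V] :
    (spike G).edgeSet.ncard = G.edgeSet.ncard + Nat.card V := by
  rw [edgeSet_spike, ncard_union_eq (disjoint_image_inl_range_pendantEdge _),
    ncard_image_of_injective _ (Sym2.map.injective Sum.inl_injective),
    ← image_univ, ncard_image_of_injective _ injective_pendantEdge, ncard_univ]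

lemma injOn_edgeLabel_spike_iff (f : V ⊕ V → ℕ) :
    InjOn (edgeLabel f) (spike G).edgeSet ↔
      InjOn (edgeLabel (f ∘ Sum.inl)) G.edgeSet ∧
      Injective (fun v => Nat.dist (f (.inl v)) (f (.inr v))) ∧
      ∀ e ∈ G.edgeSet, ∀ v, edgeLabel (f ∘ Sum.inl) e ≠ Nat.dist (f (.inl v)) (f (.inr v)) := by
  rw [edgeSet_spike, injOn_union (disjoint_image_inl_range_pendantEdge _),
    ← (Sym2.map.injective Sum.inl_injective).injOn.comp_iff, edgeLabel_comp_map, ← image_univ,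
    ← injective_pendantEdge.injOn.comp_iff, injOn_univ]
  simp only [forall_mem_image, mem_univ, forall_const, edgeLabel_map]
  rfl

end Spike

section Labelings

variable {V : Type} {G : SimpleGraph V}

def spikeLabeling (n : ℕ) (g : V → ℕ) : V ⊕ V → ℕ :=
  Sum.elim (fun v => 2 * g v) (fun v => 2 * n - 1 - 2 * g v)

theorem IsGracefulLabeling.isStrongGracefulLabeling_spike [Fintype V] {g : V → ℕ}
    (hg : IsGracefulLabeling G g) (hcard : G.edgeSet.ncard + 1 = Fintype.card V) :
    IsStrongGracefulLabeling (spike G) (spikeMatching G) (spikeLabeling (Fintype.card V) g) := by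
  set n := Fintype.card V
  obtain ⟨hinj, hle, hlabel⟩ := (isGracefulLabeling_iff_injOn_edgeLabel G g).1 hg
  have hlt : ∀ v, g v < n := fun v => by have := hle v; omega
  have hspike : (spike G).edgeSet.ncard = 2 * n - 1 := by
    rw [ncard_edgeSet_spike, Nat.card_eq_fintype_card]; omega
  have heven : ∀ u v, (spikeLabeling n g ∘ Sum.inl) u % 2 =
      (spikeLabeling n g ∘ Sum.inl) v % 2 := by
    simp [spikeLabeling]
  have hhalf : (fun v => (spikeLabeling n g ∘ Sum.inl) v / 2) = g := by
    simp [spikeLabeling]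
  refine ⟨(isGracefulLabeling_iff_injOn_edgeLabel _ _).2 ⟨?_, ?_, ?_⟩, ?_⟩
  · refine Injective.sumElim (fun u v h => hinj ?_) (fun u v h => hinj ?_) (fun u v h => ?_)
    all_goals have := hlt u; have := hlt v; omega
  · rintro (v | v) <;> simp only [spikeLabeling, Sum.elim_inl, Sum.elim_inr, hspike] <;>
      have := hlt v <;> omega
  · rw [injOn_edgeLabel_spike_iff, ← injOn_edgeLabel_div_two_iff heven]
    refine ⟨by rwa [hhalf], fun u v h => hinj ?_, fun e _ v => ?_⟩
    · simp only [spikeLabeling, Sum.elim_inl, Sum.elim_inr, Nat.dist] at h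
      have := hlt u; have := hlt v; omega
    · rw [edgeLabel_eq_two_mul_edgeLabel_div_two heven]
      simp only [spikeLabeling, Sum.elim_inl, Sum.elim_inr, Nat.dist]
      have := hlt v; omega
  · rintro x y (⟨v, rfl, rfl⟩ | ⟨v, rfl, rfl⟩) <;>
      simp only [spikeLabeling, Sum.elim_inl, Sum.elim_inr, Fintype.card_sum] <;>
      have := hlt v <;> omega

theorem IsStrongGracefulLabeling.isGracefulLabeling_div_two_comp_inl [Fintype V]
    {f : V ⊕ V → ℕ} (hf : IsStrongGracefulLabeling (spike G) (spikeMatching G) f)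
    (hG : G.Preconnected) (hcard : G.edgeSet.ncard + 1 = Fintype.card V) :
    IsGracefulLabeling G (fun v => f (.inl v) / 2) := by
  set n := Fintype.card V
  obtain ⟨hgraceful, hmatch⟩ := hf
  obtain ⟨hinj, hle, hlabel⟩ := (isGracefulLabeling_iff_injOn_edgeLabel _ f).1 hgraceful
  obtain ⟨htree, hpendant, hcross⟩ := (injOn_edgeLabel_spike_iff f).1 hlabel
  have hspike : (spike G).edgeSet.ncard = 2 * n - 1 := by
    rw [ncard_edgeSet_spike, Nat.card_eq_fintype_card]; omega
  have hsum : ∀ v, f (.inl v) + f (.inr v) = 2 * n - 1 := fun v => by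
    simpa [n, Fintype.card_sum, two_mul] using hmatch _ _ (.inl ⟨v, rfl, rfl⟩)
  have hodd : ∀ v, Odd (Nat.dist (f (.inl v)) (f (.inr v))) := fun v => by
    have := Fintype.card_pos_iff.2 ⟨v⟩
    have := hsum v
    rw [Nat.odd_iff]; unfold Nat.dist; omega
  have hparity_adj : ∀ u w, G.Adj u w → f (.inl u) % 2 = f (.inl w) % 2 := by
    intro u w huw
    by_contra hne
    have := hle (.inl u); have := hle (.inl w)
    obtain ⟨v, hv⟩ := odd_mem_range_of_injective hpendant hodd
      (fun v => by have := hsum v; unfold Nat.dist; omega)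
      (k := Nat.dist (f (.inl u)) (f (.inl w))) (by rw [Nat.odd_iff]; unfold Nat.dist; omega)
      (by unfold Nat.dist; omega)
    exact hcross s(u, w) huw v hv.symm
  have hparity := hG.eq_of_forall_adj hparity_adj
  refine (isGracefulLabeling_iff_injOn_edgeLabel G _).2 ⟨fun u w h => ?_, fun v => ?_, ?_⟩
  · have := hparity u w
    exact Sum.inl_injective (hinj (by simp only at h; omega))
  · have := hle (.inl v); omega
  · exact (injOn_edgeLabel_div_two_iff hparity).2 htree

end Labelings

/-- A tree `T` is graceful if and only if its spike tree `spik T` is strongly graceful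
with respect to the perfect matching consisting of the added end edges. -/
theorem graceful_iff_spike_stronglyGraceful {V : Type} [Fintype V] (G : SimpleGraph V)
    (hT : G.IsTree) :
    (∃ f : V → ℕ, IsGracefulLabeling G f) ↔
    (∃ f : V ⊕ V → ℕ, IsStrongGracefulLabeling (spike G) (spikeMatching G) f) := by
  have hcard := hT.ncard_edgeSet_add_one
  exact ⟨fun ⟨g, hg⟩ => ⟨_, hg.isStrongGracefulLabeling_spike hcard⟩,
    fun ⟨f, hf⟩ => ⟨_, hf.isGracefulLabeling_div_two_comp_inl hT.connected.preconnected hcard⟩⟩
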